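/- arXiv:1306.0386 — 2 statements merged into one kernel-verified Lean document; each statement's English description precedes it below -/
import Mathlib

section
/- Let π be a non-optimal policy and let π' be the policy obtained from π by one step of Simplex-PI (π' agrees with π everywhere except at a state i* maximizing the advantage a_π(i) over all states i, where π'(i*) achieves T v_π(i*)). Then 1ᵀ(v_* − v_{π'}) ≤ (1 − (1−γ)/n) · 1ᵀ(v_* − v_π). In particular, the sequence (1ᵀ(v_* − v_{π_k}))_{k≥0} built by Simplex-PI is contracting with coefficient 1 − (1−γ)/n. -/
open Matrix BigOperators

/-- A finite discounted MDP with `n ≥ 1` states and `m ≥ 2` actions: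
transition probabilities `p i a j`, rewards `r i a j`, discount factor `γ ∈ (0,1)`. -/
structure MDP (n m : ℕ) : Type where
  n_pos : 1 ≤ n
  m_ge_two : 2 ≤ m
  p : Fin n → Fin m → Fin n → ℝ
  r : Fin n → Fin m → Fin n → ℝ
  γ : ℝ
  p_nonneg : ∀ i a j, 0 ≤ p i a j
  p_sum : ∀ i a, ∑ j, p i a j = 1
  γ_pos : 0 < γ
  γ_lt_one : γ < 1

/-- A (stationary deterministic) policy. -/
abbrev MDP.Policy (n m : ℕ) : Type := Fin n → Fin m

namespace MDP

variable {n m : ℕ}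

/-- The row-stochastic transition matrix `P_π` of a policy. -/
def P (M : MDP n m) (π : Policy n m) : Matrix (Fin n) (Fin n) ℝ :=
  Matrix.of fun i j => M.p i (π i) j

/-- The expected reward vector `r_π` of a policy. -/
def rPol (M : MDP n m) (π : Policy n m) : Fin n → ℝ :=
  fun i => ∑ j, M.p i (π i) j * M.r i (π i) j

/-- The Bellman operator `T_π v = r_π + γ P_π v` of a policy. -/
def Tpol (M : MDP n m) (π : Policy n m) (v : Fin n → ℝ) : Fin n → ℝ :=
  fun i => M.rPol π i + M.γ * (M.P π *ᵥ v) i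

/-- `IsValue M V` asserts that, for every policy `π`, `V π` is the value function `v_π`,
i.e. the (unique) solution of the Bellman equation `v_π = T_π v_π`. -/
def IsValue (M : MDP n m) (V : Policy n m → Fin n → ℝ) : Prop :=
  ∀ π, V π = M.Tpol π (V π)

/-- The optimal Bellman operator `T v = max_π T_π v` (componentwise maximum). -/
noncomputable def T (M : MDP n m) (v : Fin n → ℝ) : Fin n → ℝ :=
  fun i => ⨆ π : Policy n m, M.Tpol π v i

/-- The optimal value function `v_*`, the componentwise maximum of `v_π` over policies. -/
noncomputable def vStar (M : MDP n m) (V : Policy n m → Fin n → ℝ) : Fin n → ℝ :=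
  fun i => ⨆ π : Policy n m, V π i

/-- A policy is optimal when its value equals `v_*`. -/
def IsOptimal (M : MDP n m) (V : Policy n m → Fin n → ℝ) (π : Policy n m) : Prop :=
  V π = M.vStar V

/-- `π'` is greedy with respect to `v_π`: `T_{π'} v_π = T v_π`.  One step of Howard's PI
from a non-optimal `π` moves to such a `π'`. -/
def Greedy (M : MDP n m) (V : Policy n m → Fin n → ℝ) (π π' : Policy n m) : Prop :=
  M.Tpol π' (V π) = M.T (V π)

/-- One step of Simplex-PI: `π'` agrees with `π` except at a single state `s` maximizing
the advantage `a_π(i) = (T v_π - v_π)(i)`, where `π'(s)` achieves `T v_π(s)`. -/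
def SimplexStep (M : MDP n m) (V : Policy n m → Fin n → ℝ) (π π' : Policy n m) : Prop :=
  ∃ s : Fin n, (∀ i, i ≠ s → π' i = π i) ∧
    (∀ i, M.T (V π) i - V π i ≤ M.T (V π) s - V π s) ∧
    M.Tpol π' (V π) s = M.T (V π) s

/-- The vector `x_π = (I - γ P_πᵀ)⁻¹ 1`. -/
noncomputable def xPol (M : MDP n m) (π : Policy n m) : Fin n → ℝ :=
  ((1 : Matrix (Fin n) (Fin n) ℝ) - M.γ • (M.P π)ᵀ)⁻¹ *ᵥ (fun _ => (1 : ℝ))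

/-- `R` is a recurrent class of `π`: nonempty, closed under positive-probability
transitions of `P_π`, and every state of `R` is reachable from every other state of `R`
along positive-probability transitions.  (For a deterministic MDP this is the notion of
a cycle of `π`.) -/
def IsRecClass (M : MDP n m) (π : Policy n m) (R : Set (Fin n)) : Prop :=
  R.Nonempty ∧ (∀ i ∈ R, ∀ j, 0 < M.P π i j → j ∈ R) ∧
    ∀ i ∈ R, ∀ j ∈ R, Relation.ReflTransGen (fun a b => 0 < M.P π a b) i j

/-- A state is recurrent for `π` if it belongs to some recurrent class of `π`. -/
def Recurrent (M : MDP n m) (π : Policy n m) (i : Fin n) : Prop :=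
  ∃ R : Set (Fin n), M.IsRecClass π R ∧ i ∈ R

/-- A state is transient for `π` if it is not recurrent for `π`. -/
def Transient (M : MDP n m) (π : Policy n m) (i : Fin n) : Prop :=
  ¬ M.Recurrent π i

/-- Assumption 1: `τ_t, τ_r ≥ 1` with `x_π(i) ≤ τ_t` for transient states and
`x_π(i) ≥ n / ((1-γ) τ_r)` for recurrent states, for every policy `π`. -/
def Ass1 (M : MDP n m) (τt τr : ℝ) : Prop :=
  1 ≤ τt ∧ 1 ≤ τr ∧
    (∀ π i, M.Transient π i → M.xPol π i ≤ τt) ∧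
    (∀ π i, M.Recurrent π i → (n : ℝ) / ((1 - M.γ) * τr) ≤ M.xPol π i)

/-- Assumption 2: the state space is partitioned into a set of states transient for every
policy and a set of states recurrent for every policy. -/
def Ass2 (M : MDP n m) : Prop :=
  ∃ 𝒯 ℛ : Set (Fin n), 𝒯 ∪ ℛ = Set.univ ∧ 𝒯 ∩ ℛ = ∅ ∧
    ∀ π : Policy n m, (∀ i ∈ 𝒯, M.Transient π i) ∧ (∀ i ∈ ℛ, M.Recurrent π i)

/-- The MDP is deterministic when every transition probability is 0 or 1. -/
def Deterministic (M : MDP n m) : Prop :=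
  ∀ i a j, M.p i a j = 0 ∨ M.p i a j = 1

/-- `V_max = (max_π ‖r_π‖_∞) / (1 - γ)`. -/
noncomputable def Vmax (M : MDP n m) : ℝ :=
  (⨆ π : Policy n m, ‖M.rPol π‖) / (1 - M.γ)

end MDP

/-! Write `v = v_π` and let `A = a_π(s)` be the largest advantage. Every value difference
`v_σ - v` solves `d = (T_σ v - v) + γ P_σ d`, so a minimum/maximum principle for such
fixed points of row-stochastic matrices bounds it by its source term. For `σ = π'` the source
is `A` at `s` and `0` elsewhere, so `1ᵀ(v_{π'} - v) ≥ A`; for an arbitrary `σ` it is at most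
`A`, so `v_* - v ≤ A / (1 - γ)` componentwise and `1ᵀ(v_* - v) ≤ n A / (1 - γ)`. Together
these give the contraction. -/

namespace Matrix

variable {ι : Type*} [Fintype ι] [DecidableEq ι] {P : Matrix ι ι ℝ} {d g : ι → ℝ} {c γ : ℝ}

lemma le_mulVec_of_mem_rowStochastic (hP : P ∈ rowStochastic ℝ ι) (h : ∀ j, c ≤ d j) (i : ι) :
    c ≤ (P *ᵥ d) i := by
  have := nonneg_mulVec_of_mem_rowStochastic hP (x := d - c • 1) (fun j => by simpa using h j) i
  rw [mulVec_sub, mulVec_smul, one_vecMul_of_mem_rowStochastic hP] at this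
  simpa using this

lemma mulVec_le_of_mem_rowStochastic (hP : P ∈ rowStochastic ℝ ι) (h : ∀ j, d j ≤ c) (i : ι) :
    (P *ᵥ d) i ≤ c := by
  have := le_mulVec_of_mem_rowStochastic hP (d := -d) (c := -c) (fun j => neg_le_neg (h j)) i
  rwa [mulVec_neg, Pi.neg_apply, neg_le_neg_iff] at this

lemma le_of_eq_add_smul_mulVec (hP : P ∈ rowStochastic ℝ ι) (hγ₀ : 0 ≤ γ) (hγ₁ : γ < 1)
    (hd : d = g + γ • (P *ᵥ d)) (hg : 0 ≤ g) : g ≤ d := by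
  have hd' : ∀ i, d i = g i + γ * (P *ᵥ d) i := fun i => by simpa using congrFun hd i
  intro i
  obtain ⟨i₀, -, hi₀⟩ := Finset.exists_min_image Finset.univ d ⟨i, Finset.mem_univ i⟩
  have hmin : ∀ j, d i₀ ≤ d j := fun j => hi₀ j (Finset.mem_univ j)
  have hγd : γ * d i₀ ≤ γ * (P *ᵥ d) i₀ :=
    mul_le_mul_of_nonneg_left (le_mulVec_of_mem_rowStochastic hP hmin i₀) hγ₀
  have hd₀ : 0 ≤ d i₀ := nonneg_of_mul_nonneg_right
    (by linarith [hd' i₀, show 0 ≤ g i₀ from hg i₀] : 0 ≤ (1 - γ) * d i₀) (by linarith)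
  have hPd : 0 ≤ (P *ᵥ d) i := le_mulVec_of_mem_rowStochastic hP (fun j => hd₀.trans (hmin j)) i
  linarith [hd' i, mul_nonneg hγ₀ hPd]

lemma one_sub_mul_le_of_eq_add_smul_mulVec (hP : P ∈ rowStochastic ℝ ι) (hγ₀ : 0 ≤ γ)
    (hγ₁ : γ ≤ 1) (hd : d = g + γ • (P *ᵥ d)) (hg : ∀ i, g i ≤ c) (i : ι) :
    (1 - γ) * d i ≤ c := by
  have hd' : ∀ i, d i = g i + γ * (P *ᵥ d) i := fun i => by simpa using congrFun hd i
  obtain ⟨i₀, -, hi₀⟩ := Finset.exists_max_image Finset.univ d ⟨i, Finset.mem_univ i⟩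
  have hmax : ∀ j, d j ≤ d i₀ := fun j => hi₀ j (Finset.mem_univ j)
  have hγd : γ * (P *ᵥ d) i₀ ≤ γ * d i₀ :=
    mul_le_mul_of_nonneg_left (mulVec_le_of_mem_rowStochastic hP hmax i₀) hγ₀
  calc (1 - γ) * d i ≤ (1 - γ) * d i₀ := mul_le_mul_of_nonneg_left (hmax i) (by linarith)
    _ ≤ c := by linarith [hd' i₀, hg i₀]

end Matrix

namespace MDP

variable {n m : ℕ} (M : MDP n m) {V : Policy n m → Fin n → ℝ}

lemma P_mem_rowStochastic (π : Policy n m) : M.P π ∈ rowStochastic ℝ (Fin n) :=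
  mem_rowStochastic_iff_sum.2 ⟨fun i j => M.p_nonneg i (π i) j, fun i => M.p_sum i (π i)⟩

lemma Tpol_apply_congr {σ σ' : Policy n m} (v : Fin n → ℝ) {i : Fin n} (h : σ i = σ' i) :
    M.Tpol σ v i = M.Tpol σ' v i := by
  simp [Tpol, rPol, P, mulVec, dotProduct, h]

lemma Tpol_apply_le_T (σ : Policy n m) (v : Fin n → ℝ) (i : Fin n) : M.Tpol σ v i ≤ M.T v i :=
  le_ciSup (f := fun σ => M.Tpol σ v i) (Set.finite_range _).bddAbove σ

lemma value_le_T_value (hV : M.IsValue V) (π : Policy n m) (i : Fin n) :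
    V π i ≤ M.T (V π) i := by
  conv_lhs => rw [hV π]
  exact M.Tpol_apply_le_T π (V π) i

lemma value_sub_value (hV : M.IsValue V) (π σ : Policy n m) :
    V σ - V π = (M.Tpol σ (V π) - V π) + M.γ • (M.P σ *ᵥ (V σ - V π)) := by
  conv_lhs => rw [hV σ]
  ext i
  simp [Tpol, mulVec_sub]
  ring

lemma Tpol_apply_sub_value_le_sum_value_sub (hV : M.IsValue V) {π π' : Policy n m} {s : Fin n}
    (hagree : ∀ i, i ≠ s → π' i = π i) (hs : V π s ≤ M.Tpol π' (V π) s) :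
    M.Tpol π' (V π) s - V π s ≤ ∑ i, (V π' i - V π i) := by
  set g := M.Tpol π' (V π) - V π
  have hg : 0 ≤ g := fun i => by
    by_cases hi : i = s
    · subst hi
      simpa [g] using hs
    · simp [g, M.Tpol_apply_congr (V π) (hagree i hi), ← congrFun (hV π) i]
  have hle : g ≤ V π' - V π := le_of_eq_add_smul_mulVec (M.P_mem_rowStochastic π')
    M.γ_pos.le M.γ_lt_one (M.value_sub_value hV π π') hg
  calc g s ≤ ∑ i, g i := Finset.single_le_sum (fun i _ => hg i) (Finset.mem_univ s)
    _ ≤ ∑ i, (V π' i - V π i) := Finset.sum_le_sum fun i _ => hle i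

lemma one_sub_γ_mul_vStar_sub_value_le (hV : M.IsValue V) (π : Policy n m) {c : ℝ}
    (hc : ∀ j, M.T (V π) j - V π j ≤ c) (i : Fin n) :
    (1 - M.γ) * (M.vStar V i - V π i) ≤ c := by
  have : Nonempty (Fin m) := ⟨⟨0, by linarith [M.m_ge_two]⟩⟩
  obtain ⟨σ, hσ⟩ := exists_eq_ciSup_of_finite (f := fun σ : Policy n m => V σ i)
  rw [vStar, ← hσ]
  exact one_sub_mul_le_of_eq_add_smul_mulVec (M.P_mem_rowStochastic σ) M.γ_pos.le
    M.γ_lt_one.le (M.value_sub_value hV π σ)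
    (fun j => (sub_le_sub_right (M.Tpol_apply_le_T σ _ j) _).trans (hc j)) i

end MDP

theorem simplex_contraction_general {n m : ℕ} (M : MDP n m)
    (V : MDP.Policy n m → Fin n → ℝ) (hV : M.IsValue V)
    (π π' : MDP.Policy n m)
    (hstep : M.SimplexStep V π π') :
    ∑ i, (M.vStar V i - V π' i) ≤
      (1 - (1 - M.γ) / (n : ℝ)) * ∑ i, (M.vStar V i - V π i) := by
  obtain ⟨s, hagree, hmax, hTs⟩ := hstep
  set A := M.T (V π) s - V π s
  have hgain : A ≤ ∑ i, (V π' i - V π i) := by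
    have := M.Tpol_apply_sub_value_le_sum_value_sub hV hagree (hTs ▸ M.value_le_T_value hV π s)
    rwa [hTs] at this
  have hgap : (1 - M.γ) * ∑ i, (M.vStar V i - V π i) ≤ n * A := by
    calc (1 - M.γ) * ∑ i, (M.vStar V i - V π i)
        = ∑ i, (1 - M.γ) * (M.vStar V i - V π i) := Finset.mul_sum _ _ _
      _ ≤ ∑ _i : Fin n, A :=
        Finset.sum_le_sum fun i _ => M.one_sub_γ_mul_vStar_sub_value_le hV π hmax i
      _ = n * A := by simp
  have hn : (0 : ℝ) < n := by exact_mod_cast M.n_pos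
  have hgap' : (1 - M.γ) / n * ∑ i, (M.vStar V i - V π i) ≤ A := by
    rwa [div_mul_eq_mul_div, div_le_iff₀ hn, mul_comm A]
  have hsplit : ∑ i, (M.vStar V i - V π' i)
      = ∑ i, (M.vStar V i - V π i) - ∑ i, (V π' i - V π i) := by
    rw [← Finset.sum_sub_distrib]
    simp only [sub_sub_sub_cancel_right]
  rw [hsplit, sub_mul, one_mul]
  linarith

/-- one step of Simplex-PI contracts `1ᵀ(v_* - v_π)` with coefficient
`1 - (1-γ)/n`. -/
theorem simplex_contraction {n m : ℕ} (M : MDP n m)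
    (V : MDP.Policy n m → Fin n → ℝ) (hV : M.IsValue V)
    (π π' : MDP.Policy n m) (hπ : ¬ M.IsOptimal V π)
    (hstep : M.SimplexStep V π π') :
    ∑ i, (M.vStar V i - V π' i) ≤
      (1 - (1 - M.γ) / (n : ℝ)) * ∑ i, (M.vStar V i - V π i) :=
  simplex_contraction_general M V hV π π' hstep
end

section
/- Let π be a non-optimal policy, let π' be obtained from π by one step of Simplex-PI, and let s be the switched state (the state maximizing the advantage a_π(i) over all states i). Then: (i) ‖v_* − v_π‖_∞ ≤ (1/(1−γ)) (v_*(s) − v_π(s)); (ii) v_*(s) − v_{π'}(s) ≤ (v_*(s) − v_π(s)) − (1−γ)‖v_* − v_π‖_∞; and consequently (iii) v_*(s) − v_{π'}(s) ≤ γ (v_*(s) − v_π(s)). -/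
open Matrix BigOperators

section SimplexAux

variable {n m : ℕ}

lemma MDP.P_mulVec_apply (M : MDP n m) (σ : MDP.Policy n m) (v : Fin n → ℝ) (i : Fin n) :
    (M.P σ *ᵥ v) i = ∑ j, M.p i (σ i) j * v j := by
  simp [MDP.P, Matrix.mulVec, dotProduct]

lemma MDP.mulVec_ge (M : MDP n m) (σ : MDP.Policy n m) (v : Fin n → ℝ) (c : ℝ)
    (h : ∀ j, c ≤ v j) (i : Fin n) : c ≤ (M.P σ *ᵥ v) i := by
  rw [M.P_mulVec_apply]
  calc c = ∑ j, M.p i (σ i) j * c := by rw [← Finset.sum_mul, M.p_sum, one_mul]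
    _ ≤ ∑ j, M.p i (σ i) j * v j :=
      Finset.sum_le_sum fun j _ => mul_le_mul_of_nonneg_left (h j) (M.p_nonneg i (σ i) j)

lemma MDP.mulVec_le (M : MDP n m) (σ : MDP.Policy n m) (v : Fin n → ℝ) (c : ℝ)
    (h : ∀ j, v j ≤ c) (i : Fin n) : (M.P σ *ᵥ v) i ≤ c := by
  rw [M.P_mulVec_apply]
  calc ∑ j, M.p i (σ i) j * v j ≤ ∑ j, M.p i (σ i) j * c :=
      Finset.sum_le_sum fun j _ => mul_le_mul_of_nonneg_left (h j) (M.p_nonneg i (σ i) j)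
    _ = c := by rw [← Finset.sum_mul, M.p_sum, one_mul]

lemma MDP.P_mulVec_sub (M : MDP n m) (σ : MDP.Policy n m) (u v : Fin n → ℝ) (i : Fin n) :
    (M.P σ *ᵥ u) i - (M.P σ *ᵥ v) i = (M.P σ *ᵥ fun j => u j - v j) i := by
  simp [M.P_mulVec_apply, mul_sub, Finset.sum_sub_distrib]

lemma MDP.Tpol_sub_apply (M : MDP n m) (σ : MDP.Policy n m) (u v : Fin n → ℝ) (i : Fin n) :
    M.Tpol σ u i - M.Tpol σ v i = M.γ * ((M.P σ *ᵥ fun j => u j - v j) i) := by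
  rw [← M.P_mulVec_sub]
  simp [MDP.Tpol]
  ring

lemma MDP.Tpol_congr (M : MDP n m) {σ τ : MDP.Policy n m} (v : Fin n → ℝ) (i : Fin n)
    (h : σ i = τ i) : M.Tpol σ v i = M.Tpol τ v i := by
  simp [MDP.Tpol, MDP.rPol, MDP.P, Matrix.mulVec, dotProduct, h]

lemma MDP.Tpol_le_T (M : MDP n m) (σ : MDP.Policy n m) (v : Fin n → ℝ) (i : Fin n) :
    M.Tpol σ v i ≤ M.T v i :=
  le_ciSup (Set.Finite.bddAbove (Set.finite_range fun π => M.Tpol π v i)) σ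

/-- If `v ≤ T_σ v` componentwise then `v ≤ v_σ`. -/
lemma MDP.value_ge (M : MDP n m) (V : MDP.Policy n m → Fin n → ℝ) (hV : M.IsValue V)
    (σ : MDP.Policy n m) (v : Fin n → ℝ) (hv : ∀ i, v i ≤ M.Tpol σ v i) (i : Fin n) :
    v i ≤ V σ i := by
  have hne : Nonempty (Fin n) := Fin.pos_iff_nonempty.mp M.n_pos
  obtain ⟨i₀, hi₀⟩ := Finite.exists_min (fun j => V σ j - v j)
  have h1γ : 0 < 1 - M.γ := by linarith [M.γ_lt_one]
  suffices h0 : 0 ≤ V σ i₀ - v i₀ by linarith [hi₀ i]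
  have h1 : V σ i₀ = M.Tpol σ (V σ) i₀ := congrFun (hV σ) i₀
  have h2 := M.Tpol_sub_apply σ (V σ) v i₀
  have h3 : V σ i₀ - v i₀ ≤ (M.P σ *ᵥ fun j => V σ j - v j) i₀ :=
    M.mulVec_ge σ _ _ (fun j => hi₀ j) i₀
  have h4 := mul_le_mul_of_nonneg_left h3 M.γ_pos.le
  have h5 := hv i₀
  nlinarith [M.γ_pos]

/-- If the advantage of `σ` over `π` is at most `c` everywhere, then
`v_σ - v_π ≤ c / (1-γ)` everywhere. -/
lemma MDP.value_sub_le (M : MDP n m) (V : MDP.Policy n m → Fin n → ℝ) (hV : M.IsValue V)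
    (σ π : MDP.Policy n m) (c : ℝ)
    (hc : ∀ i, M.Tpol σ (V π) i - V π i ≤ c) (i : Fin n) :
    V σ i - V π i ≤ c / (1 - M.γ) := by
  have hne : Nonempty (Fin n) := Fin.pos_iff_nonempty.mp M.n_pos
  obtain ⟨i₁, hi₁⟩ := Finite.exists_max (fun j => V σ j - V π j)
  have h1γ : 0 < 1 - M.γ := by linarith [M.γ_lt_one]
  suffices h : V σ i₁ - V π i₁ ≤ c / (1 - M.γ) by linarith [hi₁ i]
  rw [le_div_iff₀ h1γ]
  have h1 : V σ i₁ = M.Tpol σ (V σ) i₁ := congrFun (hV σ) i₁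
  have h2 : V π i₁ = M.Tpol σ (V π) i₁ - (M.Tpol σ (V π) i₁ - V π i₁) := by ring
  have h3 := M.Tpol_sub_apply σ (V σ) (V π) i₁
  have h4 : (M.P σ *ᵥ fun j => V σ j - V π j) i₁ ≤ V σ i₁ - V π i₁ :=
    M.mulVec_le σ _ _ (fun j => hi₁ j) i₁
  have h5 := mul_le_mul_of_nonneg_left h4 M.γ_pos.le
  nlinarith [hc i₁]

end SimplexAux

/-- local progress of a Simplex-PI step at the switched state `s`. -/
theorem simplex_switched_state_progress {n m : ℕ} (M : MDP n m)
    (V : MDP.Policy n m → Fin n → ℝ) (hV : M.IsValue V)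
    (π π' : MDP.Policy n m) (hπ : ¬ M.IsOptimal V π)
    (s : Fin n)
    (hagree : ∀ i, i ≠ s → π' i = π i)
    (hmax : ∀ i, M.T (V π) i - V π i ≤ M.T (V π) s - V π s)
    (hach : M.Tpol π' (V π) s = M.T (V π) s) :
    ‖M.vStar V - V π‖ ≤ (1 / (1 - M.γ)) * (M.vStar V s - V π s) ∧
    M.vStar V s - V π' s ≤
      (M.vStar V s - V π s) - (1 - M.γ) * ‖M.vStar V - V π‖ ∧
    M.vStar V s - V π' s ≤ M.γ * (M.vStar V s - V π s) := by
  have hnem : Nonempty (Fin m) :=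
    Fin.pos_iff_nonempty.mp (lt_of_lt_of_le (by norm_num) M.m_ge_two)
  have hnpol : Nonempty (MDP.Policy n m) := hnem.elim fun a => ⟨fun _ => a⟩
  have h1γ : 0 < 1 - M.γ := by linarith [M.γ_lt_one]
  set a := M.T (V π) s - V π s with ha
  have hTππ : ∀ i, M.Tpol π (V π) i = V π i := fun i => (congrFun (hV π) i).symm
  have ha0 : 0 ≤ a := by
    have h := M.Tpol_le_T π (V π) s
    rw [hTππ s] at h
    simp only [ha]; linarith
  have hadv : ∀ σ : MDP.Policy n m, ∀ i, M.Tpol σ (V π) i - V π i ≤ a := by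
    intro σ i
    have h1 := M.Tpol_le_T σ (V π) i
    have h2 := hmax i
    linarith
  have hgap : ∀ σ : MDP.Policy n m, ∀ i, V σ i - V π i ≤ a / (1 - M.γ) :=
    fun σ i => M.value_sub_le V hV σ π a (hadv σ) i
  have hstar_le : ∀ i, M.vStar V i - V π i ≤ a / (1 - M.γ) := by
    intro i
    have h : M.vStar V i ≤ V π i + a / (1 - M.γ) :=
      ciSup_le fun σ => by linarith [hgap σ i]
    linarith
  have hstar_ge : ∀ σ : MDP.Policy n m, ∀ i, V σ i ≤ M.vStar V i := fun σ i =>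
    le_ciSup (Set.Finite.bddAbove (Set.finite_range fun τ => V τ i)) σ
  have hπ'ge : ∀ i, V π i ≤ M.Tpol π' (V π) i := by
    intro i
    by_cases hi : i = s
    · rw [hi, hach]
      have := M.Tpol_le_T π (V π) s
      rw [hTππ s] at this
      linarith
    · rw [M.Tpol_congr (V π) i (hagree i hi), hTππ i]
  have hVπ'ge : ∀ i, V π i ≤ V π' i := M.value_ge V hV π' (V π) hπ'ge
  have hkey : a ≤ V π' s - V π s := by
    have h1 : V π' s = M.Tpol π' (V π') s := congrFun (hV π') s
    have h2 := M.Tpol_sub_apply π' (V π') (V π) s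
    have h3 : (0 : ℝ) ≤ (M.P π' *ᵥ fun j => V π' j - V π j) s :=
      M.mulVec_ge π' _ 0 (fun j => by linarith [hVπ'ge j]) s
    have h4 := mul_le_mul_of_nonneg_left h3 M.γ_pos.le
    have h5 : M.Tpol π' (V π) s = M.T (V π) s := hach
    simp only [ha]
    linarith
  have hΔs0 : 0 ≤ M.vStar V s - V π s := by linarith [hstar_ge π s]
  have haΔ : a ≤ M.vStar V s - V π s := by linarith [hkey, hstar_ge π' s]
  have hnorm_le : ‖M.vStar V - V π‖ ≤ a / (1 - M.γ) := by
    rw [pi_norm_le_iff_of_nonneg (div_nonneg ha0 h1γ.le)]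
    intro i
    rw [Pi.sub_apply, Real.norm_eq_abs, abs_le]
    constructor
    · have := div_nonneg ha0 h1γ.le
      have := hstar_ge π i
      linarith
    · exact hstar_le i
  have hn2 : ‖M.vStar V - V π‖ * (1 - M.γ) ≤ a := (le_div_iff₀ h1γ).mp hnorm_le
  have hpi : M.vStar V s - V π s ≤ ‖M.vStar V - V π‖ := by
    have h := norm_le_pi_norm (M.vStar V - V π) s
    rw [Pi.sub_apply, Real.norm_eq_abs, abs_of_nonneg hΔs0] at h
    exact h
  refine ⟨?_, ?_, ?_⟩
  · calc ‖M.vStar V - V π‖ ≤ a / (1 - M.γ) := hnorm_le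
      _ ≤ (M.vStar V s - V π s) / (1 - M.γ) := by gcongr
      _ = (1 / (1 - M.γ)) * (M.vStar V s - V π s) := by ring
  · nlinarith [hn2, hkey]
  · nlinarith [hn2, hkey, hpi, mul_le_mul_of_nonneg_left hpi h1γ.le]
end
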